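/- arXiv:1704.02544 — 5 statements merged into one kernel-verified Lean document; each statement's English description precedes it below -/
import Mathlib

section
/- Let c ∈ ℝ^S be strictly positive componentwise, α ∈ (0,1), and T the Bellman operator T J = max_a (g_a + α P_a J) with fixed point J*. Then J* is the unique minimizer of cᵀJ over the set {J ∈ ℝ^S : J ≥ T J}, and min{cᵀJ : J ≥ T J} = cᵀJ*. -/
/-!
Comparison principle: if `U ≤ T U` and `T J ≤ J` then `U ≤ J`. At a state `s₀` maximising
`U - J`, an action `a₀` attaining `T U s₀` gives `U s₀ - J s₀ ≤ α (P a₀ *ᵥ (U - J)) s₀ ≤ α (U s₀ - J s₀)`,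
since a row-stochastic matrix averages; as `α < 1` the maximum of `U - J` is `≤ 0`.
Applied with `U = J*`, every `J ≥ T J` dominates `J*` pointwise, and a strictly positive
weight `c` turns this into `c ⬝ᵥ J* ≤ c ⬝ᵥ J`, with equality only if `J = J*`.
-/

open Matrix

section Stochastic

variable {R S : Type*} [CommSemiring R] [PartialOrder R] [IsOrderedRing R] [Fintype S]

theorem mulVec_apply_le_of_forall_le {P : Matrix S S R} (hPnn : ∀ s s', 0 ≤ P s s')
    (hProw : ∀ s, ∑ s', P s s' = 1) {v : S → R} {M : R} (hv : ∀ s, v s ≤ M) (s : S) :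
    (P *ᵥ v) s ≤ M :=
  calc (P *ᵥ v) s = ∑ s', P s s' * v s' := rfl
    _ ≤ ∑ s', P s s' * M :=
      Finset.sum_le_sum fun s' _ => mul_le_mul_of_nonneg_left (hv s') (hPnn s s')
    _ = M := by rw [← Finset.sum_mul, hProw, one_mul]

end Stochastic

theorem eq_of_le_of_dotProduct_eq {S : Type*} [Fintype S] {c x y : S → ℝ} (hc : ∀ s, 0 < c s)
    (hxy : x ≤ y) (h : c ⬝ᵥ x = c ⬝ᵥ y) : x = y := by
  by_contra hne
  obtain ⟨s, hs⟩ : ∃ s, x s < y s := (Pi.lt_def.mp (lt_of_le_of_ne hxy hne)).2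
  refine h.not_lt (Finset.sum_lt_sum (fun s _ => ?_) ⟨s, Finset.mem_univ s, ?_⟩)
  · exact mul_le_mul_of_nonneg_left (hxy s) (hc s).le
  · exact mul_lt_mul_of_pos_left hs (hc s)

namespace Bellman

variable {S A : Type*} [Fintype S]

noncomputable def bellman (α : ℝ) (g : A → S → ℝ) (P : A → Matrix S S ℝ) (J : S → ℝ) :
    S → ℝ :=
  fun s => ⨆ a, g a s + α * (P a *ᵥ J) s

theorem le_of_le_bellman_of_bellman_le [Finite A] [Nonempty A] {α : ℝ} (hα0 : 0 ≤ α)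
    (hα1 : α < 1) {g : A → S → ℝ} {P : A → Matrix S S ℝ} (hPnn : ∀ a s s', 0 ≤ P a s s')
    (hProw : ∀ a s, ∑ s', P a s s' = 1) {U J : S → ℝ} (hU : U ≤ bellman α g P U)
    (hJ : bellman α g P J ≤ J) : U ≤ J := by
  intro s
  have : Nonempty S := ⟨s⟩
  obtain ⟨s₀, hs₀⟩ := Finite.exists_max (U - J)
  obtain ⟨a₀, ha₀⟩ := exists_eq_ciSup_of_finite (f := fun a => g a s₀ + α * (P a *ᵥ U) s₀)
  have hU₀ : U s₀ ≤ g a₀ s₀ + α * (P a₀ *ᵥ U) s₀ := ha₀ ▸ hU s₀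
  have hJ₀ : g a₀ s₀ + α * (P a₀ *ᵥ J) s₀ ≤ J s₀ :=
    (le_ciSup (Finite.bddAbove_range fun a => g a s₀ + α * (P a *ᵥ J) s₀) a₀).trans (hJ s₀)
  have hP : (P a₀ *ᵥ (U - J)) s₀ ≤ (U - J) s₀ :=
    mulVec_apply_le_of_forall_le (hPnn a₀) (hProw a₀) hs₀ s₀
  rw [mulVec_sub, Pi.sub_apply, Pi.sub_apply] at hP
  have hmax : U s₀ - J s₀ ≤ α * (U s₀ - J s₀) :=
    calc U s₀ - J s₀ ≤ α * ((P a₀ *ᵥ U) s₀ - (P a₀ *ᵥ J) s₀) := by linarith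
      _ ≤ α * (U s₀ - J s₀) := mul_le_mul_of_nonneg_left hP hα0
  have hM : U s₀ - J s₀ ≤ 0 := by nlinarith
  exact sub_nonpos.mp ((hs₀ s).trans hM)

end Bellman

open Bellman in
theorem stmt7_general {S A : Type*} [Fintype S] [Fintype A] [Nonempty A]
    (α : ℝ) (hα0 : 0 < α) (hα1 : α < 1)
    (c : S → ℝ) (hc : ∀ s, 0 < c s)
    (g : A → S → ℝ) (P : A → Matrix S S ℝ)
    (hPnn : ∀ a s s', 0 ≤ P a s s') (hProw : ∀ a s, ∑ s', P a s s' = 1)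
    (Jstar : S → ℝ)
    (hfix : (fun s => ⨆ a, (g a s + α * (P a).mulVec Jstar s)) = Jstar) :
    ((fun s => ⨆ a, (g a s + α * (P a).mulVec Jstar s)) ≤ Jstar) ∧
    (∀ J : S → ℝ, (fun s => ⨆ a, (g a s + α * (P a).mulVec J s)) ≤ J →
        c ⬝ᵥ Jstar ≤ c ⬝ᵥ J) ∧
    (∀ J : S → ℝ, (fun s => ⨆ a, (g a s + α * (P a).mulVec J s)) ≤ J →
        c ⬝ᵥ J = c ⬝ᵥ Jstar → J = Jstar) := by
  have hmin : ∀ J, bellman α g P J ≤ J → Jstar ≤ J := fun J hJ =>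
    le_of_le_bellman_of_bellman_le hα0.le hα1 hPnn hProw hfix.ge hJ
  refine ⟨hfix.le, fun J hJ => ?_, fun J hJ hcJ => ?_⟩
  · exact dotProduct_le_dotProduct_of_nonneg_left (hmin J hJ) fun s => (hc s).le
  · exact (eq_of_le_of_dotProduct_eq hc (hmin J hJ) hcJ.symm).symm

/-- for strictly positive c, the fixed point J* of the Bellman
operator is the unique minimizer of cᵀJ over the superharmonic set
{J : J ≥ T J}, and the minimum value is cᵀJ*. -/
theorem stmt7 {S A : Type*} [Fintype S] [Nonempty S] [Fintype A] [Nonempty A]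
    (α : ℝ) (hα0 : 0 < α) (hα1 : α < 1)
    (c : S → ℝ) (hc : ∀ s, 0 < c s)
    (g : A → S → ℝ) (P : A → Matrix S S ℝ)
    (hPnn : ∀ a s s', 0 ≤ P a s s') (hProw : ∀ a s, ∑ s', P a s s' = 1)
    (Jstar : S → ℝ)
    (hfix : (fun s => ⨆ a, (g a s + α * (P a).mulVec Jstar s)) = Jstar) :
    ((fun s => ⨆ a, (g a s + α * (P a).mulVec Jstar s)) ≤ Jstar) ∧
    (∀ J : S → ℝ, (fun s => ⨆ a, (g a s + α * (P a).mulVec J s)) ≤ J →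
        c ⬝ᵥ Jstar ≤ c ⬝ᵥ J) ∧
    (∀ J : S → ℝ, (fun s => ⨆ a, (g a s + α * (P a).mulVec J s)) ≤ J →
        c ⬝ᵥ J = c ⬝ᵥ Jstar → J = Jstar) :=
  stmt7_general α hα0 hα1 c hc g P hPnn hProw Jstar hfix
end

section
/- Let Φ ∈ ℝ^{S×k} and suppose ψ = Φ r₀ for some r₀ ∈ ℝ^k, where ψ : S → (0,∞). Define J*_ALP(s) = inf{ rᵀφ(s) : Φ r ≥ J*, r ∈ ℝ^k } where φ(s)ᵀ is the s-th row of Φ. Let ε = inf_{r ∈ ℝ^k} ‖J* − Φ r‖_{∞,ψ} and assume the infimum is attained. Then ‖J* − J*_ALP‖_{∞,ψ} ≤ 2ε. -/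
/-!
Shift an approximation `Φ r⋆` of weighted error `ε` up by `ε ψ = Φ (ε r₀)`: this stays in the
span of `Φ` and dominates `J*`, so it is feasible for the ALP. Hence `J* ≤ J*_ALP ≤ Φ r⋆ + ε ψ ≤ J* + 2 ε ψ`.
-/

open Matrix

section WeightedSupNorm

variable {S : Type*}

/-- `‖J‖_{∞,ψ}`; for infinite `S` the supremum may be unbounded, where `⨆` gives `0`. -/
noncomputable def weightedSupNorm (ψ J : S → ℝ) : ℝ :=
  ⨆ s, |J s| / ψ s

theorem weightedSupNorm_nonneg {ψ : S → ℝ} (hψ : ∀ s, 0 < ψ s) (J : S → ℝ) :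
    0 ≤ weightedSupNorm ψ J :=
  Real.iSup_nonneg fun s => div_nonneg (abs_nonneg _) (hψ s).le

theorem abs_le_weightedSupNorm_mul [Finite S] {ψ : S → ℝ} (hψ : ∀ s, 0 < ψ s)
    (J : S → ℝ) (s : S) : |J s| ≤ weightedSupNorm ψ J * ψ s :=
  (div_le_iff₀ (hψ s)).mp <|
    le_ciSup (f := fun s => |J s| / ψ s) (Set.finite_range _).bddAbove s

theorem weightedSupNorm_le {ψ : S → ℝ} (hψ : ∀ s, 0 < ψ s) {J : S → ℝ} {c : ℝ}
    (hc : 0 ≤ c) (h : ∀ s, |J s| ≤ c * ψ s) : weightedSupNorm ψ J ≤ c :=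
  Real.iSup_le (fun s => (div_le_iff₀ (hψ s)).mpr (h s)) hc

end WeightedSupNorm

section ApproximateLP

variable {S : Type*} {k : ℕ}

noncomputable def alpValue (Φ : Matrix S (Fin k) ℝ) (J : S → ℝ) (s : S) : ℝ :=
  sInf {x : ℝ | ∃ r : Fin k → ℝ, J ≤ Φ *ᵥ r ∧ x = (Φ *ᵥ r) s}

variable {Φ : Matrix S (Fin k) ℝ} {J : S → ℝ}

theorem alpValue_le {r : Fin k → ℝ} (hr : J ≤ Φ *ᵥ r) (s : S) :
    alpValue Φ J s ≤ (Φ *ᵥ r) s :=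
  csInf_le ⟨J s, by rintro _ ⟨r', hr', rfl⟩; exact hr' s⟩ ⟨r, hr, rfl⟩

theorem le_alpValue {r : Fin k → ℝ} (hr : J ≤ Φ *ᵥ r) (s : S) : J s ≤ alpValue Φ J s :=
  le_csInf ⟨_, r, hr, rfl⟩ <| by rintro _ ⟨r', hr', rfl⟩; exact hr' s

theorem abs_sub_alpValue_le {r₀ r : Fin k → ℝ} {c : ℝ}
    (h : ∀ s, |J s - (Φ *ᵥ r) s| ≤ c * (Φ *ᵥ r₀) s) (s : S) :
    |J s - alpValue Φ J s| ≤ 2 * c * (Φ *ᵥ r₀) s := by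
  have hshift : ∀ t, (Φ *ᵥ (r + c • r₀)) t = (Φ *ᵥ r) t + c * (Φ *ᵥ r₀) t := by
    simp [mulVec_add, mulVec_smul]
  have hfeas : J ≤ Φ *ᵥ (r + c • r₀) := fun t => by
    rw [hshift]; linarith [(abs_le.mp (h t)).2]
  have hlower := le_alpValue hfeas s
  have hupper := (alpValue_le hfeas s).trans_eq (hshift s)
  rw [abs_sub_comm, abs_of_nonneg (sub_nonneg.mpr hlower)]
  linarith [(abs_le.mp (h s)).1]

end ApproximateLP

theorem stmt10_general {S : Type*} [Fintype S] {k : ℕ}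
    (Φ : Matrix S (Fin k) ℝ) (r₀ : Fin k → ℝ)
    (ψ : S → ℝ) (hψpos : ∀ s, 0 < ψ s) (hψspan : ψ = Φ.mulVec r₀)
    (Jstar : S → ℝ) (ε : ℝ) (rstar : Fin k → ℝ)
    (hrstar : (⨆ s, |Jstar s - Φ.mulVec rstar s| / ψ s) = ε)
    (JALP : S → ℝ)
    (hJALP : ∀ s, JALP s =
      sInf {x : ℝ | ∃ r : Fin k → ℝ, Jstar ≤ Φ.mulVec r ∧ x = Φ.mulVec r s}) :
    (⨆ s, |Jstar s - JALP s| / ψ s) ≤ 2 * ε := by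
  obtain rfl : JALP = alpValue Φ Jstar := funext hJALP
  change weightedSupNorm ψ (Jstar - Φ *ᵥ rstar) = ε at hrstar
  have hbest (s : S) : |Jstar s - (Φ *ᵥ rstar) s| ≤ ε * ψ s :=
    hrstar ▸ abs_le_weightedSupNorm_mul hψpos (Jstar - Φ *ᵥ rstar) s
  have hε : 0 ≤ 2 * ε := mul_nonneg zero_le_two (hrstar ▸ weightedSupNorm_nonneg hψpos _)
  subst hψspan
  exact weightedSupNorm_le hψpos hε (abs_sub_alpValue_le hbest)

/-- with ψ = Φ r₀ in the span of the features, and ε the (attained)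
best weighted-max-norm approximation error of J* in the span of Φ,
‖J* − J*_ALP‖_{∞,ψ} ≤ 2ε, where J*_ALP(s) = inf{rᵀφ(s) : Φ r ≥ J*}. -/
theorem stmt10 {S : Type*} [Fintype S] [Nonempty S] {k : ℕ}
    (Φ : Matrix S (Fin k) ℝ) (r₀ : Fin k → ℝ)
    (ψ : S → ℝ) (hψpos : ∀ s, 0 < ψ s) (hψspan : ψ = Φ.mulVec r₀)
    (Jstar : S → ℝ) (ε : ℝ) (rstar : Fin k → ℝ)
    (hrstar : (⨆ s, |Jstar s - Φ.mulVec rstar s| / ψ s) = ε)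
    (hmin : ∀ r : Fin k → ℝ, ε ≤ ⨆ s, |Jstar s - Φ.mulVec r s| / ψ s)
    (JALP : S → ℝ)
    (hJALP : ∀ s, JALP s =
      sInf {x : ℝ | ∃ r : Fin k → ℝ, Jstar ≤ Φ.mulVec r ∧ x = Φ.mulVec r s}) :
    (⨆ s, |Jstar s - JALP s| / ψ s) ≤ 2 * ε :=
  stmt10_general Φ r₀ ψ hψpos hψspan Jstar ε rstar hrstar JALP hJALP
end

section
/- Let Φ ∈ ℝ^{S×k} with rows φ(s)ᵀ, let S₀ ⊆ S, and let Λ ∈ ℝ₊^{S×S₀} satisfy φ(s) = Σ_{s'∈S₀} Λ(s,s') φ(s') for all s ∈ S. Let ψ : S → (0,∞), r* ∈ ℝ^k with ‖J* − Φr*‖_{∞,ψ} = ε. Define J*_ALP(s) = inf{rᵀφ(s) : Φr ≥ J*} and J*_LRA(s) = inf{rᵀφ(s) : (Φr)(s') ≥ J*(s') for all s' ∈ S₀}, and assume both infima are attained for every s. Then ‖J*_ALP − J*_LRA‖_{∞,ψ} ≤ ‖J*_ALP − J*‖_{∞,ψ} + (1 + ‖Λψ‖_{∞,ψ})·ε,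 where (Λψ)(s) = Σ_{s'∈S₀} Λ(s,s')ψ(s'). -/
/-!
Every LRA-feasible `r` is bounded below through the cone: `(Φ r)(s) = ∑ Λ(s,s') (Φ r)(s')
≥ ∑ Λ(s,s') J*(s')`, and comparing `J*` with `Φ r*` on `S₀` turns this into
`J_LRA(s) ≥ J*(s) − ε ψ(s) − ε (Λψ)(s)`. Since also `J_LRA ≤ J_ALP`, the error
`J_ALP(s) − J_LRA(s)` is at most `(J_ALP(s) − J*(s)) + ε ψ(s) + ε (Λψ)(s)`.
-/

open Matrix

section WeightedSup

variable {ι : Type*} {f ψ : ι → ℝ}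

theorem le_iSup_div_mul [Finite ι] (f ψ : ι → ℝ) {i : ι} (hψ : 0 < ψ i) :
    f i ≤ (⨆ j, f j / ψ j) * ψ i :=
  (div_le_iff₀ hψ).1 <|
    le_ciSup (f := fun j => f j / ψ j) (Set.finite_range _).bddAbove i

theorem iSup_div_le {c : ℝ} (hψ : ∀ i, 0 < ψ i) (hc : 0 ≤ c) (h : ∀ i, f i ≤ c * ψ i) :
    ⨆ i, f i / ψ i ≤ c :=
  Real.iSup_le (fun i => (div_le_iff₀ (hψ i)).2 (h i)) hc

theorem iSup_div_nonneg (hf : ∀ i, 0 ≤ f i) (hψ : ∀ i, 0 ≤ ψ i) : 0 ≤ ⨆ i, f i / ψ i :=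
  Real.iSup_nonneg fun i => div_nonneg (hf i) (hψ i)

end WeightedSup

section ConicCover

variable {m n R : Type*} [Fintype n] {Φ : Matrix m n R} {S₀ : Finset m} {Λ : m → m → R}

theorem mulVec_apply_eq_sum_of_row_eq_sum [CommSemiring R]
    (hcone : ∀ s j, Φ s j = ∑ s' ∈ S₀, Λ s s' * Φ s' j) (r : n → R) (s : m) :
    (Φ *ᵥ r) s = ∑ s' ∈ S₀, Λ s s' * (Φ *ᵥ r) s' := by
  simp only [mulVec, dotProduct, Finset.mul_sum]
  rw [Finset.sum_comm]
  exact Finset.sum_congr rfl fun j _ => by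
    rw [hcone s j, Finset.sum_mul]
    simp only [mul_assoc]

theorem sum_mul_le_mulVec_apply_of_le_on [CommSemiring R] [PartialOrder R] [IsOrderedRing R]
    {s : m} (hΛ : ∀ s', 0 ≤ Λ s s') (hcone : ∀ s j, Φ s j = ∑ s' ∈ S₀, Λ s s' * Φ s' j)
    {g : m → R} {r : n → R} (hr : ∀ s' ∈ S₀, g s' ≤ (Φ *ᵥ r) s') :
    ∑ s' ∈ S₀, Λ s s' * g s' ≤ (Φ *ᵥ r) s := by
  rw [mulVec_apply_eq_sum_of_row_eq_sum hcone]
  exact Finset.sum_le_sum fun s' hs' => mul_le_mul_of_nonneg_left (hr s' hs') (hΛ s')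

theorem sub_sub_le_mulVec_apply_of_le_on {Φ : Matrix m n ℝ} {Λ : m → m → ℝ} {s : m}
    (hΛ : ∀ s', 0 ≤ Λ s s') (hcone : ∀ s j, Φ s j = ∑ s' ∈ S₀, Λ s s' * Φ s' j)
    {J ψ : m → ℝ} {ε : ℝ} {rstar r : n → ℝ}
    (hrstar : ∀ s, |J s - (Φ *ᵥ rstar) s| ≤ ε * ψ s) (hr : ∀ s' ∈ S₀, J s' ≤ (Φ *ᵥ r) s') :
    J s - ε * ψ s - ε * ∑ s' ∈ S₀, Λ s s' * ψ s' ≤ (Φ *ᵥ r) s := by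
  have hcover := sum_mul_le_mulVec_apply_of_le_on hΛ hcone
    (g := fun s' => (Φ *ᵥ rstar) s' - ε * ψ s') (r := r)
    fun s' hs' => by linarith [(abs_le.1 (hrstar s')).1, hr s' hs']
  have hrstar_cover : (Φ *ᵥ rstar) s - ε * ∑ s' ∈ S₀, Λ s s' * ψ s' =
      ∑ s' ∈ S₀, Λ s s' * ((Φ *ᵥ rstar) s' - ε * ψ s') := by
    rw [mulVec_apply_eq_sum_of_row_eq_sum hcone, Finset.mul_sum, ← Finset.sum_sub_distrib]
    exact Finset.sum_congr rfl fun _ _ => by ring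
  linarith [(abs_le.1 (hrstar s)).2]

end ConicCover

theorem stmt11_general {S : Type*} [Fintype S] {k : ℕ}
    (Φ : Matrix S (Fin k) ℝ) (S₀ : Finset S)
    (Λ : S → S → ℝ) (hΛnn : ∀ s s', 0 ≤ Λ s s')
    (hcone : ∀ s j, Φ s j = ∑ s' ∈ S₀, Λ s s' * Φ s' j)
    (ψ : S → ℝ) (hψpos : ∀ s, 0 < ψ s)
    (Jstar : S → ℝ) (ε : ℝ) (rstar : Fin k → ℝ)
    (hrstar : (⨆ s, |Jstar s - Φ.mulVec rstar s| / ψ s) = ε)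
    (JALP JLRA : S → ℝ)
    (hJLRA : ∀ s, JLRA s =
      sInf {x : ℝ | ∃ r : Fin k → ℝ,
        (∀ s' ∈ S₀, Jstar s' ≤ Φ.mulVec r s') ∧ x = Φ.mulVec r s})
    (hALPatt : ∀ s, ∃ r : Fin k → ℝ,
      Jstar ≤ Φ.mulVec r ∧ Φ.mulVec r s = JALP s)
    (hLRAatt : ∀ s, ∃ r : Fin k → ℝ,
      (∀ s' ∈ S₀, Jstar s' ≤ Φ.mulVec r s') ∧ Φ.mulVec r s = JLRA s) :
    (⨆ s, |JALP s - JLRA s| / ψ s)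
      ≤ (⨆ s, |JALP s - Jstar s| / ψ s)
        + (1 + ⨆ s, (∑ s' ∈ S₀, Λ s s' * ψ s') / ψ s) * ε := by
  have hψ : ∀ s, 0 ≤ ψ s := fun s => (hψpos s).le
  have hε : ∀ s, |Jstar s - Φ.mulVec rstar s| ≤ ε * ψ s :=
    fun s => hrstar ▸ le_iSup_div_mul (fun s => |Jstar s - Φ.mulVec rstar s|) ψ (hψpos s)
  have hε0 : 0 ≤ ε := hrstar ▸ iSup_div_nonneg (fun _ => abs_nonneg _) hψ
  have hΛψ0 : ∀ s, 0 ≤ ∑ s' ∈ S₀, Λ s s' * ψ s' :=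
    fun s => Finset.sum_nonneg fun s' _ => mul_nonneg (hΛnn s s') (hψ s')
  have hLRA_le_ALP : ∀ s, JLRA s ≤ JALP s := by
    intro s
    obtain ⟨r, hr, hrs⟩ := hALPatt s
    rw [hJLRA s, ← hrs]
    refine csInf_le ⟨∑ s' ∈ S₀, Λ s s' * Jstar s', ?_⟩ ⟨r, fun s' _ => hr s', rfl⟩
    rintro _ ⟨r', hr', rfl⟩
    exact sum_mul_le_mulVec_apply_of_le_on (hΛnn s) hcone hr'
  refine iSup_div_le hψpos (add_nonneg (iSup_div_nonneg (fun _ => abs_nonneg _) hψ)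
    (mul_nonneg (add_nonneg zero_le_one (iSup_div_nonneg hΛψ0 hψ)) hε0)) fun s => ?_
  obtain ⟨r, hr, hrs⟩ := hLRAatt s
  have hLRA_ge := hrs ▸ sub_sub_le_mulVec_apply_of_le_on (hΛnn s) hcone hε hr
  have hALP := le_iSup_div_mul (fun s => |JALP s - Jstar s|) ψ (hψpos s)
  have hΛψ := mul_le_mul_of_nonneg_left
    (le_iSup_div_mul (fun s => ∑ s' ∈ S₀, Λ s s' * ψ s') ψ (hψpos s)) hε0
  rw [abs_of_nonneg (sub_nonneg.2 (hLRA_le_ALP s))]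
  linarith [le_abs_self (JALP s - Jstar s)]

/-- with a conic cover Λ of the feature vectors by the selected
states S₀, ‖J*_ALP − J*_LRA‖_{∞,ψ} ≤ ‖J*_ALP − J*‖_{∞,ψ} + (1 + ‖Λψ‖_{∞,ψ})·ε. -/
theorem stmt11 {S : Type*} [Fintype S] [Nonempty S] {k : ℕ}
    (Φ : Matrix S (Fin k) ℝ) (S₀ : Finset S)
    (Λ : S → S → ℝ) (hΛnn : ∀ s s', 0 ≤ Λ s s')
    (hcone : ∀ s j, Φ s j = ∑ s' ∈ S₀, Λ s s' * Φ s' j)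
    (ψ : S → ℝ) (hψpos : ∀ s, 0 < ψ s)
    (Jstar : S → ℝ) (ε : ℝ) (rstar : Fin k → ℝ)
    (hrstar : (⨆ s, |Jstar s - Φ.mulVec rstar s| / ψ s) = ε)
    (JALP JLRA : S → ℝ)
    (hJALP : ∀ s, JALP s =
      sInf {x : ℝ | ∃ r : Fin k → ℝ, Jstar ≤ Φ.mulVec r ∧ x = Φ.mulVec r s})
    (hJLRA : ∀ s, JLRA s =
      sInf {x : ℝ | ∃ r : Fin k → ℝ,
        (∀ s' ∈ S₀, Jstar s' ≤ Φ.mulVec r s') ∧ x = Φ.mulVec r s})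
    (hALPatt : ∀ s, ∃ r : Fin k → ℝ,
      Jstar ≤ Φ.mulVec r ∧ Φ.mulVec r s = JALP s)
    (hLRAatt : ∀ s, ∃ r : Fin k → ℝ,
      (∀ s' ∈ S₀, Jstar s' ≤ Φ.mulVec r s') ∧ Φ.mulVec r s = JLRA s) :
    (⨆ s, |JALP s - JLRA s| / ψ s)
      ≤ (⨆ s, |JALP s - Jstar s| / ψ s)
        + (1 + ⨆ s, (∑ s' ∈ S₀, Λ s s' * ψ s') / ψ s) * ε :=
  stmt11_general Φ S₀ Λ hΛnn hcone ψ hψpos Jstar ε rstar hrstar JALP JLRA hJLRA hALPatt hLRAatt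
end

section
/- Consider the linear program inf{ dᵀx : A x ≥ b, x ∈ ℝ^v } with A ∈ ℝ^{u×v}, b ∈ ℝ^u, d ∈ ℝ^v, and suppose the feasible set is nonempty. Then the infimum is > −∞ if and only if d lies in the conic hull of the rows of A, i.e., there exists y ∈ ℝ₊^u with Aᵀy = d. -/
/-!
If `d ⬝ᵥ c < 0` for some `c` with `A *ᵥ c ≥ 0`, moving from a feasible point along `c` keeps
feasibility and drives the objective to `-∞`; so boundedness forces `d ⬝ᵥ c ≥ 0` on the cone
`A *ᵥ c ≥ 0`, and Farkas' lemma puts `d` in the cone spanned by the rows of `A`. Conversely,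
`Aᵀ y = d` with `y ≥ 0` gives the weak-duality bound `d ⬝ᵥ x ≥ b ⬝ᵥ y`.

Farkas' lemma is Hahn–Banach separation from the finitely generated cone, which is closed
because, by the conic Carathéodory theorem, it is a finite union of images of orthants under
injective linear maps.
-/

open Matrix

section ConicHull

variable {𝕜 ι M : Type*} [Semiring 𝕜] [PartialOrder 𝕜] [AddCommMonoid M] [Module 𝕜 M]

variable (𝕜) in
def conicHull (r : ι → M) (s : Finset ι) : Set M :=
  {x | ∃ y : ι → 𝕜, (∀ i ∈ s, 0 ≤ y i) ∧ ∑ i ∈ s, y i • r i = x}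

variable {r : ι → M} {s t : Finset ι} {x : M}

lemma zero_mem_conicHull : (0 : M) ∈ conicHull 𝕜 r s :=
  ⟨0, fun _ _ => le_rfl, by simp⟩

lemma smul_mem_conicHull {a : 𝕜} {i : ι} (ha : 0 ≤ a) (hi : i ∈ s) :
    a • r i ∈ conicHull 𝕜 r s := by
  classical
  exact ⟨fun j => if j = i then a else 0, fun j _ => by dsimp only; split_ifs <;> simp [ha],
    by simp [ite_smul, hi]⟩

lemma convex_conicHull [IsOrderedRing 𝕜] : Convex 𝕜 (conicHull 𝕜 r s) := by
  rintro _ ⟨y, hy, rfl⟩ _ ⟨y', hy', rfl⟩ a b ha hb -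
  refine ⟨a • y + b • y', fun i hi => ?_, ?_⟩
  · simpa using add_nonneg (mul_nonneg ha (hy i hi)) (mul_nonneg hb (hy' i hi))
  · simp only [Pi.add_apply, Pi.smul_apply, smul_eq_mul, add_smul, mul_smul,
      Finset.sum_add_distrib, Finset.smul_sum]

lemma conicHull_mono (hts : t ⊆ s) : conicHull 𝕜 r t ⊆ conicHull 𝕜 r s := by
  classical
  rintro _ ⟨y, hy, rfl⟩
  refine ⟨fun i => if i ∈ t then y i else 0, fun i _ => ?_, ?_⟩
  · dsimp only
    split_ifs with hi
    exacts [hy i hi, le_rfl]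
  · simp only [ite_smul, zero_smul, Finset.sum_ite_mem, Finset.inter_eq_right.mpr hts]

end ConicHull

section Caratheodory

variable {𝕜 ι M : Type*} [Field 𝕜] [LinearOrder 𝕜] [IsStrictOrderedRing 𝕜]
  [AddCommGroup M] [Module 𝕜 M] {r : ι → M} {s : Finset ι} {x : M}

lemma exists_mem_conicHull_erase [DecidableEq ι] (hx : x ∈ conicHull 𝕜 r s)
    (hs : ¬LinearIndepOn 𝕜 r s) : ∃ i ∈ s, x ∈ conicHull 𝕜 r (s.erase i) := by
  obtain ⟨y, hy, rfl⟩ := hx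
  obtain ⟨c, hc, hpos⟩ : ∃ c : ι → 𝕜, ∑ i ∈ s, c i • r i = 0 ∧ ∃ i ∈ s, 0 < c i := by
    obtain ⟨c, hc, i, hi, hci⟩ := not_linearIndepOn_finset_iff.mp hs
    rcases hci.lt_or_gt with hneg | hpos
    · exact ⟨-c, by simp [Finset.sum_neg_distrib, hc], i, hi, by simpa using hneg⟩
    · exact ⟨c, hc, i, hi, hpos⟩
  -- Move from `y` along `-c` until the first coefficient reaches zero.
  obtain ⟨i₀, hi₀, hmin⟩ := (s.filter (0 < c ·)).exists_min_image (fun i => y i / c i)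
    (by simpa [Finset.filter_nonempty_iff] using hpos)
  rw [Finset.mem_filter] at hi₀
  set τ := y i₀ / c i₀
  have hτ : 0 ≤ τ := div_nonneg (hy _ hi₀.1) hi₀.2.le
  refine ⟨i₀, hi₀.1, fun i => y i - τ * c i, fun i hi => ?_, ?_⟩
  · have hi := (Finset.mem_erase.mp hi).2
    rw [sub_nonneg]
    rcases le_or_gt (c i) 0 with hci | hci
    · exact (mul_nonpos_of_nonneg_of_nonpos hτ hci).trans (hy i hi)
    · exact (le_div_iff₀ hci).mp (hmin i (Finset.mem_filter.mpr ⟨hi, hci⟩))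
  · rw [Finset.sum_erase _ (by simp [τ, div_mul_cancel₀ _ hi₀.2.ne'])]
    simp only [sub_smul, Finset.sum_sub_distrib, mul_smul, ← Finset.smul_sum, hc, smul_zero,
      sub_zero]

theorem exists_linearIndepOn_mem_conicHull (hx : x ∈ conicHull 𝕜 r s) :
    ∃ t ⊆ s, LinearIndepOn 𝕜 r t ∧ x ∈ conicHull 𝕜 r t := by
  classical
  induction s using Finset.strongInduction with
  | H s ih =>
    by_cases hs : LinearIndepOn 𝕜 r s
    · exact ⟨s, subset_rfl, hs, hx⟩
    · obtain ⟨i, hi, hxi⟩ := exists_mem_conicHull_erase hx hs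
      obtain ⟨t, hts, ht, hxt⟩ := ih _ (Finset.erase_ssubset hi) hxi
      exact ⟨t, hts.trans (Finset.erase_subset _ _), ht, hxt⟩

end Caratheodory

section Farkas

variable {ι M : Type*} [AddCommGroup M] [Module ℝ M] [TopologicalSpace M]
  [IsTopologicalAddGroup M] [ContinuousSMul ℝ M] [T2Space M] {r : ι → M} {s : Finset ι}

lemma isClosed_conicHull_of_linearIndepOn (hs : LinearIndepOn ℝ r s) :
    IsClosed (conicHull ℝ r s) := by
  classical
  have hL : Topology.IsClosedEmbedding (Fintype.linearCombination ℝ fun i : s => r i) :=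
    LinearMap.isClosedEmbedding_of_injective
      (LinearMap.ker_eq_bot.mpr hs.fintypeLinearCombination_injective)
  have : conicHull ℝ r s = Fintype.linearCombination ℝ (fun i : s => r i) '' Set.Ici 0 := by
    ext x
    simp only [conicHull, Set.mem_ofPred_eq, Set.mem_image, Set.mem_Ici,
      Fintype.linearCombination_apply]
    constructor
    · rintro ⟨y, hy, rfl⟩
      exact ⟨fun i => y i, fun i => hy i i.2, Finset.sum_coe_sort s fun i => y i • r i⟩
    · rintro ⟨g, hg, rfl⟩
      refine ⟨fun i => if h : i ∈ s then g ⟨i, h⟩ else 0,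
        fun i hi => by simpa [hi] using hg ⟨i, hi⟩, ?_⟩
      rw [← Finset.sum_coe_sort]
      simp
  rw [this]
  exact hL.isClosedMap _ isClosed_Ici

theorem isClosed_conicHull : IsClosed (conicHull ℝ r s) := by
  have : conicHull ℝ r s =
      ⋃ t ∈ {t : Finset ι | t ⊆ s ∧ LinearIndepOn ℝ r t}, conicHull ℝ r t := by
    ext x
    simp only [Set.mem_iUnion, Set.mem_ofPred_eq, exists_prop]
    constructor
    · intro hx
      obtain ⟨t, hts, ht, hxt⟩ := exists_linearIndepOn_mem_conicHull hx
      exact ⟨t, ⟨hts, ht⟩, hxt⟩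
    · rintro ⟨t, ⟨hts, -⟩, hxt⟩
      exact conicHull_mono hts hxt
  rw [this]
  exact Set.Finite.isClosed_biUnion
    (s.powerset.finite_toSet.subset fun t ht => Finset.mem_powerset.mpr ht.1)
    fun t ht => isClosed_conicHull_of_linearIndepOn ht.2

theorem exists_strongDual_of_notMem_conicHull [LocallyConvexSpace ℝ M] {d : M}
    (hd : d ∉ conicHull ℝ r s) : ∃ f : StrongDual ℝ M, (∀ i ∈ s, 0 ≤ f (r i)) ∧ f d < 0 := by
  obtain ⟨f, u, hfd, hf⟩ :=
    geometric_hahn_banach_point_closed convex_conicHull isClosed_conicHull hd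
  have hu : u < 0 := by simpa using hf 0 zero_mem_conicHull
  refine ⟨f, fun i hi => ?_, hfd.trans hu⟩
  by_contra! hfi
  have := hf _ (smul_mem_conicHull (div_nonneg_of_nonpos hu.le hfi.le) hi)
  rw [map_smul, smul_eq_mul, div_mul_cancel₀ _ hfi.ne] at this
  exact this.false

end Farkas

namespace Matrix

variable {m n : Type*} [Fintype n] (A : Matrix m n ℝ)

theorem exists_nonneg_transpose_mulVec_eq [Fintype m] (d : n → ℝ)
    (h : ∀ x, 0 ≤ A *ᵥ x → 0 ≤ d ⬝ᵥ x) :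
    ∃ y : m → ℝ, (∀ i, 0 ≤ y i) ∧ Aᵀ *ᵥ y = d := by
  classical
  by_contra hd
  have hd' : d ∉ conicHull ℝ (fun i => A i) Finset.univ := by
    rintro ⟨y, hy, hyd⟩
    exact hd ⟨y, fun i => hy i (Finset.mem_univ i), by rw [mulVec_transpose, vecMul_eq_sum, hyd]⟩
  obtain ⟨f, hf, hfd⟩ := exists_strongDual_of_notMem_conicHull hd'
  set c : n → ℝ := fun j => f fun k => if j = k then 1 else 0
  have hfc (z : n → ℝ) : f z = z ⬝ᵥ c :=
    (f : (n → ℝ) →ₗ[ℝ] ℝ).pi_apply_eq_sum_univ z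
  refine (h c fun i => ?_).not_gt (by rwa [← hfc])
  simpa [mulVec, hfc] using hf i (Finset.mem_univ i)

variable {A} {b : m → ℝ}

lemma dotProduct_le_transpose_mulVec_dotProduct [Fintype m] {x : n → ℝ} {y : m → ℝ}
    (hy : ∀ i, 0 ≤ y i) (hx : b ≤ A *ᵥ x) : b ⬝ᵥ y ≤ (Aᵀ *ᵥ y) ⬝ᵥ x := by
  rw [mulVec_transpose, ← dotProduct_mulVec, dotProduct_comm b]
  exact dotProduct_le_dotProduct_of_nonneg_left hx hy

lemma dotProduct_nonneg_of_bddBelow {d x₀ c : n → ℝ}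
    (hbdd : BddBelow {z : ℝ | ∃ x, b ≤ A *ᵥ x ∧ z = d ⬝ᵥ x}) (hx₀ : b ≤ A *ᵥ x₀)
    (hc : 0 ≤ A *ᵥ c) : 0 ≤ d ⬝ᵥ c := by
  obtain ⟨lb, hlb⟩ := hbdd
  by_contra! hdc
  obtain ⟨t, ht⟩ := exists_nat_gt ((d ⬝ᵥ x₀ - lb) / -(d ⬝ᵥ c))
  have hfeas : b ≤ A *ᵥ (x₀ + (t : ℝ) • c) := by
    rw [mulVec_add, mulVec_smul]
    exact le_add_of_le_of_nonneg hx₀ (smul_nonneg t.cast_nonneg hc)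
  have hle := hlb ⟨_, hfeas, rfl⟩
  rw [div_lt_iff₀ (neg_pos.mpr hdc)] at ht
  rw [dotProduct_add, dotProduct_smul, smul_eq_mul] at hle
  linarith

end Matrix

/-- for a feasible LP inf{dᵀx : Ax ≥ b}, the objective is bounded
below iff d lies in the conic hull of the rows of A, i.e. Aᵀy = d for some y ≥ 0. -/
theorem stmt15 {u v : ℕ} (A : Matrix (Fin u) (Fin v) ℝ) (b : Fin u → ℝ)
    (d : Fin v → ℝ) (hfeas : ∃ x : Fin v → ℝ, b ≤ A.mulVec x) :
    BddBelow {z : ℝ | ∃ x : Fin v → ℝ, b ≤ A.mulVec x ∧ z = d ⬝ᵥ x} ↔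
      ∃ y : Fin u → ℝ, (∀ i, 0 ≤ y i) ∧ A.transpose.mulVec y = d := by
  constructor
  · intro hbdd
    obtain ⟨x₀, hx₀⟩ := hfeas
    exact A.exists_nonneg_transpose_mulVec_eq d fun c hc =>
      dotProduct_nonneg_of_bddBelow hbdd hx₀ hc
  · rintro ⟨y, hy, rfl⟩
    exact ⟨b ⬝ᵥ y, by
      rintro _ ⟨x, hx, rfl⟩
      exact dotProduct_le_transpose_mulVec_dotProduct hy hx⟩
end

section
/- In the setting of the operator Γ̂ defined by (Γ̂J)(s) = inf{ rᵀφ(s) : WᵀEΦr ≥ WᵀHJ }, assume ψ = Φr₀ for some r₀ ∈ ℝ^k, ψ > 0, β_ψ = α max_a ‖P_aψ‖_{∞,ψ} < 1, W is nonnegative, and Γ̂J is finite for all J. Then Γ̂ is a contraction with factor β_ψ with respect to ‖·‖_{∞,ψ}, and hence has a unique fixed point. -/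
/-!
A vector `r` feasible for the constraints of `Γ̂ J` yields the vector `r + t β_ψ r₀`, feasible
for `Γ̂ (J + t ψ)` since `W ≥ 0` and `α P_a ψ ≤ β_ψ ψ`; as `Φ r₀ = ψ`, this gives
`Γ̂ J ≤ Γ̂ J' + β_ψ t ψ` whenever `J ≤ J' + t ψ`, `t ≥ 0`. Applied with
`t = ‖J - J'‖_{∞,ψ}` in both directions, this makes `Γ̂` a `β_ψ`-contraction. Dividing by `ψ`
identifies `‖·‖_{∞,ψ}` with the sup distance on `S → ℝ`, so Banach's fixed point theorem applies.
-/

open Matrix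

section WeightedSup

variable {S : Type*} {ψ : S → ℝ}

theorem dist_div_apply_eq (hψ : ∀ s, 0 < ψ s) (J J' : S → ℝ) (s : S) :
    dist ((J / ψ) s) ((J' / ψ) s) = |J s - J' s| / ψ s := by
  rw [Real.dist_eq, Pi.div_apply, Pi.div_apply, ← sub_div, abs_div, abs_of_pos (hψ s)]

variable [Fintype S]

theorem iSup_abs_sub_div_eq_dist (hψ : ∀ s, 0 < ψ s) (J J' : S → ℝ) :
    (⨆ s, |J s - J' s| / ψ s) = dist (J / ψ) (J' / ψ) := by
  simp only [← dist_div_apply_eq hψ]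
  refine le_antisymm (Real.iSup_le (fun s => dist_le_pi_dist _ _ s) dist_nonneg) ?_
  refine (dist_pi_le_iff (Real.iSup_nonneg fun _ => dist_nonneg)).2 fun s => ?_
  exact le_ciSup (f := fun s => dist ((J / ψ) s) ((J' / ψ) s)) (Finite.bddAbove_range _) s

theorem abs_sub_le_dist_div_mul (hψ : ∀ s, 0 < ψ s) (J J' : S → ℝ) (t : S) :
    |J t - J' t| ≤ dist (J / ψ) (J' / ψ) * ψ t := by
  rw [← div_le_iff₀ (hψ t), ← dist_div_apply_eq hψ]
  exact dist_le_pi_dist _ _ t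

theorem le_iSup_iSup_abs_div_mul {A : Type*} [Finite A] (hψ : ∀ s, 0 < ψ s)
    (f : A → S → ℝ) (a : A) (s : S) :
    f a s ≤ (⨆ a, ⨆ s, |f a s| / ψ s) * ψ s := by
  rw [← div_le_iff₀ (hψ s)]
  calc f a s / ψ s ≤ |f a s| / ψ s := by gcongr; exacts [(hψ s).le, le_abs_self _]
    _ ≤ ⨆ s, |f a s| / ψ s :=
      le_ciSup (f := fun s => |f a s| / ψ s) (Finite.bddAbove_range _) s
    _ ≤ ⨆ a, ⨆ s, |f a s| / ψ s :=
      le_ciSup (f := fun a => ⨆ s, |f a s| / ψ s) (Finite.bddAbove_range _) a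

theorem dist_div_le_of_le_add_smul {T : (S → ℝ) → S → ℝ} {β : ℝ}
    (hψ : ∀ s, 0 < ψ s) (hβ : 0 ≤ β)
    (hT : ∀ J J' c, 0 ≤ c → J ≤ J' + c • ψ → T J ≤ T J' + (β * c) • ψ) (J J' : S → ℝ) :
    dist (T J / ψ) (T J' / ψ) ≤ β * dist (J / ψ) (J' / ψ) := by
  set c := dist (J / ψ) (J' / ψ)
  have hclose : ∀ t, |J t - J' t| ≤ c * ψ t := abs_sub_le_dist_div_mul hψ J J'
  have hJJ' : J ≤ J' + c • ψ := fun t => by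
    simp only [Pi.add_apply, Pi.smul_apply, smul_eq_mul]
    linarith [(abs_sub_le_iff.1 (hclose t)).1]
  have hJ'J : J' ≤ J + c • ψ := fun t => by
    simp only [Pi.add_apply, Pi.smul_apply, smul_eq_mul]
    linarith [(abs_sub_le_iff.1 (hclose t)).2]
  refine (dist_pi_le_iff (mul_nonneg hβ dist_nonneg)).2 fun s => ?_
  have h₁ := hT J J' c dist_nonneg hJJ' s
  have h₂ := hT J' J c dist_nonneg hJ'J s
  simp only [Pi.add_apply, Pi.smul_apply, smul_eq_mul] at h₁ h₂
  rw [dist_div_apply_eq hψ, div_le_iff₀ (hψ s), abs_sub_le_iff]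
  constructor <;> linarith

/-- Conjugating by `J ↦ J / ψ` turns `T` into a contraction for the sup distance. -/
theorem existsUnique_fixedPoint_of_dist_div_le {T : (S → ℝ) → S → ℝ} {β : ℝ}
    (hψ : ∀ s, 0 < ψ s) (hβ0 : 0 ≤ β) (hβ1 : β < 1)
    (hT : ∀ J J', dist (T J / ψ) (T J' / ψ) ≤ β * dist (J / ψ) (J' / ψ)) :
    ∃! J, T J = J := by
  have hψ0 : ∀ s, ψ s ≠ 0 := fun s => (hψ s).ne'
  have hcancel : ∀ F : S → ℝ, F * ψ / ψ = F := fun F =>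
    funext fun s => mul_div_cancel_right₀ (F s) (hψ0 s)
  have hcancel' : ∀ J : S → ℝ, J / ψ * ψ = J := fun J =>
    funext fun s => div_mul_cancel₀ (J s) (hψ0 s)
  let T' : (S → ℝ) → S → ℝ := fun F => T (F * ψ) / ψ
  have hT' : ContractingWith β.toNNReal T' :=
    ⟨Real.toNNReal_lt_one.2 hβ1, LipschitzWith.of_dist_le_mul fun F G => by
      simpa only [T', hcancel, Real.coe_toNNReal _ hβ0] using hT (F * ψ) (G * ψ)⟩
  have hfixed : ∀ J, T J = J ↔ T' (J / ψ) = J / ψ := fun J => by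
    simp only [T', hcancel', funext_iff, Pi.div_apply, div_left_inj' (hψ0 _)]
  refine ⟨ContractingWith.fixedPoint T' hT' * ψ, (hfixed _).2 ?_, fun J hJ => ?_⟩
  · rw [hcancel]
    exact hT'.fixedPoint_isFixedPt
  · rw [← hT'.fixedPoint_unique ((hfixed J).1 hJ)]
    exact (hcancel' J).symm

end WeightedSup

section LinearProgram

variable {S A : Type*} [Fintype S] [Fintype A] {k m : ℕ}
  (W : S × A → Fin m → ℝ) (Φ : Matrix S (Fin k) ℝ)

/-- `(Γ̂ J)(s)` is the infimum of this set for `b = H J`. -/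
def feasibleValues (b : S × A → ℝ) (s : S) : Set ℝ :=
  {x | ∃ r : Fin k → ℝ,
    (∀ i, ∑ p, W p i * b p ≤ ∑ p, W p i * (Φ *ᵥ r) p.1) ∧ x = (Φ *ᵥ r) s}

variable {W Φ}

/-- Raising the constraint by at most `c ψ = c Φ r₀` is absorbed by moving `r` to `r + c r₀`. -/
theorem add_mem_feasibleValues (hW : ∀ p i, 0 ≤ W p i) {r₀ : Fin k → ℝ} {ψ : S → ℝ}
    (hψ : ψ = Φ *ᵥ r₀) {b b' : S × A → ℝ} {c : ℝ} (hb : ∀ p, b' p ≤ b p + c * ψ p.1)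
    {s : S} {x : ℝ} (hx : x ∈ feasibleValues W Φ b s) :
    x + c * ψ s ∈ feasibleValues W Φ b' s := by
  obtain ⟨r, hr, rfl⟩ := hx
  have hshift : ∀ t, (Φ *ᵥ (r + c • r₀)) t = (Φ *ᵥ r) t + c * ψ t := fun t => by
    rw [hψ, mulVec_add, mulVec_smul, Pi.add_apply, Pi.smul_apply, smul_eq_mul]
  refine ⟨r + c • r₀, fun i => ?_, (hshift s).symm⟩
  calc ∑ p, W p i * b' p
      ≤ ∑ p, (W p i * b p + W p i * (c * ψ p.1)) :=
        Finset.sum_le_sum fun p _ => by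
          rw [← mul_add]
          exact mul_le_mul_of_nonneg_left (hb p) (hW p i)
    _ ≤ ∑ p, (W p i * (Φ *ᵥ r) p.1 + W p i * (c * ψ p.1)) := by
        rw [Finset.sum_add_distrib, Finset.sum_add_distrib]
        exact add_le_add_left (hr i) _
    _ = ∑ p, W p i * (Φ *ᵥ (r + c • r₀)) p.1 :=
        Finset.sum_congr rfl fun p _ => by rw [hshift, mul_add]

theorem sInf_feasibleValues_le_add (hW : ∀ p i, 0 ≤ W p i) {r₀ : Fin k → ℝ} {ψ : S → ℝ}
    (hψ : ψ = Φ *ᵥ r₀) {b b' : S × A → ℝ} {c : ℝ} (hb : ∀ p, b' p ≤ b p + c * ψ p.1) {s : S}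
    (hne : (feasibleValues W Φ b s).Nonempty) (hbdd : BddBelow (feasibleValues W Φ b' s)) :
    sInf (feasibleValues W Φ b' s) ≤ sInf (feasibleValues W Φ b s) + c * ψ s := by
  rw [← sub_le_iff_le_add]
  refine le_csInf hne fun x hx => sub_le_iff_le_add.2 ?_
  exact csInf_le hbdd (add_mem_feasibleValues hW hψ hb hx)

end LinearProgram

section Bellman

variable {S A : Type*} [Fintype S]

/-- The operator `H` of the paper. -/
def bellman (α : ℝ) (g : A → S → ℝ) (P : A → Matrix S S ℝ) (J : S → ℝ) (p : S × A) : ℝ :=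
  g p.2 p.1 + α * (P p.2 *ᵥ J) p.1

theorem bellman_le_add_smul {α β c : ℝ} {g : A → S → ℝ} {P : A → Matrix S S ℝ} {ψ : S → ℝ}
    (hα : 0 ≤ α) (hPnn : ∀ a s s', 0 ≤ P a s s') (hPψ : ∀ a s, α * (P a *ᵥ ψ) s ≤ β * ψ s)
    (hc : 0 ≤ c) {J J' : S → ℝ} (hJ : J ≤ J' + c • ψ) (p : S × A) :
    bellman α g P J p ≤ bellman α g P J' p + β * c * ψ p.1 := by
  obtain ⟨s, a⟩ := p
  have hmono : (P a *ᵥ J) s ≤ (P a *ᵥ J') s + c * (P a *ᵥ ψ) s :=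
    calc (P a *ᵥ J) s ≤ (P a *ᵥ (J' + c • ψ)) s :=
          dotProduct_le_dotProduct_of_nonneg_left hJ (hPnn a s)
      _ = (P a *ᵥ J') s + c * (P a *ᵥ ψ) s := by rw [mulVec_add, mulVec_smul]; rfl
  have := mul_le_mul_of_nonneg_left hmono hα
  have := mul_le_mul_of_nonneg_left (hPψ a s) hc
  simp only [bellman]
  linarith

end Bellman

theorem stmt18_general {S A : Type*} [Fintype S] [Fintype A]
    {k m : ℕ}
    (α : ℝ) (hα0 : 0 < α)
    (g : A → S → ℝ) (P : A → Matrix S S ℝ)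
    (hPnn : ∀ a s s', 0 ≤ P a s s')
    (W : S × A → Fin m → ℝ) (hW : ∀ p i, 0 ≤ W p i)
    (Φ : Matrix S (Fin k) ℝ) (r₀ : Fin k → ℝ)
    (ψ : S → ℝ) (hψpos : ∀ s, 0 < ψ s) (hψspan : ψ = Φ.mulVec r₀)
    (βψ : ℝ) (hβψ : βψ = α * ⨆ a, ⨆ s, |(P a).mulVec ψ s| / ψ s)
    (hβψ1 : βψ < 1)
    (Γhat : (S → ℝ) → S → ℝ)
    (hΓ : ∀ (J : S → ℝ) (s : S), Γhat J s =
      sInf {x : ℝ | ∃ r : Fin k → ℝ,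
        (∀ i : Fin m,
          ∑ p : S × A, W p i * (g p.2 p.1 + α * (P p.2).mulVec J p.1)
            ≤ ∑ p : S × A, W p i * Φ.mulVec r p.1) ∧
        x = Φ.mulVec r s})
    (hfin : ∀ (J : S → ℝ) (s : S),
      ({x : ℝ | ∃ r : Fin k → ℝ,
        (∀ i : Fin m,
          ∑ p : S × A, W p i * (g p.2 p.1 + α * (P p.2).mulVec J p.1)
            ≤ ∑ p : S × A, W p i * Φ.mulVec r p.1) ∧
        x = Φ.mulVec r s}).Nonempty ∧
      BddBelow {x : ℝ | ∃ r : Fin k → ℝ,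
        (∀ i : Fin m,
          ∑ p : S × A, W p i * (g p.2 p.1 + α * (P p.2).mulVec J p.1)
            ≤ ∑ p : S × A, W p i * Φ.mulVec r p.1) ∧
        x = Φ.mulVec r s}) :
    (∀ J J' : S → ℝ,
      (⨆ s, |Γhat J s - Γhat J' s| / ψ s) ≤ βψ * ⨆ s, |J s - J' s| / ψ s) ∧
    (∃! Jfix : S → ℝ, Γhat Jfix = Jfix) := by
  have hβ0 : 0 ≤ βψ := hβψ ▸ mul_nonneg hα0.le
    (Real.iSup_nonneg fun _ => Real.iSup_nonneg fun s => div_nonneg (abs_nonneg _) (hψpos s).le)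
  have hPψ : ∀ a s, α * (P a *ᵥ ψ) s ≤ βψ * ψ s := fun a s => by
    rw [hβψ, mul_assoc]
    exact mul_le_mul_of_nonneg_left (le_iSup_iSup_abs_div_mul hψpos (fun a => P a *ᵥ ψ) a s) hα0.le
  have hshift : ∀ J J' c, 0 ≤ c → J ≤ J' + c • ψ → Γhat J ≤ Γhat J' + (βψ * c) • ψ := by
    intro J J' c hc hJ s
    rw [Pi.add_apply, Pi.smul_apply, smul_eq_mul, hΓ, hΓ]
    exact sInf_feasibleValues_le_add hW hψspan (bellman_le_add_smul hα0.le hPnn hPψ hc hJ)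
      (hfin J' s).1 (hfin J s).2
  have hcontr := dist_div_le_of_le_add_smul hψpos hβ0 hshift
  refine ⟨fun J J' => ?_, existsUnique_fixedPoint_of_dist_div_le hψpos hβ0 hβψ1 hcontr⟩
  simpa only [iSup_abs_sub_div_eq_dist hψpos] using hcontr J J'

/-- under ψ = Φr₀ with β_ψ < 1 and W nonnegative, the operator Γ̂
is a β_ψ-contraction in ‖·‖_{∞,ψ} and has a unique fixed point. -/
theorem stmt18 {S A : Type*} [Fintype S] [Nonempty S] [Fintype A] [Nonempty A]
    {k m : ℕ}
    (α : ℝ) (hα0 : 0 < α) (hα1 : α < 1)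
    (g : A → S → ℝ) (P : A → Matrix S S ℝ)
    (hPnn : ∀ a s s', 0 ≤ P a s s') (hProw : ∀ a s, ∑ s', P a s s' = 1)
    (W : S × A → Fin m → ℝ) (hW : ∀ p i, 0 ≤ W p i)
    (Φ : Matrix S (Fin k) ℝ) (r₀ : Fin k → ℝ)
    (ψ : S → ℝ) (hψpos : ∀ s, 0 < ψ s) (hψspan : ψ = Φ.mulVec r₀)
    (βψ : ℝ) (hβψ : βψ = α * ⨆ a, ⨆ s, |(P a).mulVec ψ s| / ψ s)
    (hβψ1 : βψ < 1)
    (Γhat : (S → ℝ) → S → ℝ)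
    (hΓ : ∀ (J : S → ℝ) (s : S), Γhat J s =
      sInf {x : ℝ | ∃ r : Fin k → ℝ,
        (∀ i : Fin m,
          ∑ p : S × A, W p i * (g p.2 p.1 + α * (P p.2).mulVec J p.1)
            ≤ ∑ p : S × A, W p i * Φ.mulVec r p.1) ∧
        x = Φ.mulVec r s})
    (hfin : ∀ (J : S → ℝ) (s : S),
      ({x : ℝ | ∃ r : Fin k → ℝ,
        (∀ i : Fin m,
          ∑ p : S × A, W p i * (g p.2 p.1 + α * (P p.2).mulVec J p.1)
            ≤ ∑ p : S × A, W p i * Φ.mulVec r p.1) ∧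
        x = Φ.mulVec r s}).Nonempty ∧
      BddBelow {x : ℝ | ∃ r : Fin k → ℝ,
        (∀ i : Fin m,
          ∑ p : S × A, W p i * (g p.2 p.1 + α * (P p.2).mulVec J p.1)
            ≤ ∑ p : S × A, W p i * Φ.mulVec r p.1) ∧
        x = Φ.mulVec r s}) :
    (∀ J J' : S → ℝ,
      (⨆ s, |Γhat J s - Γhat J' s| / ψ s) ≤ βψ * ⨆ s, |J s - J' s| / ψ s) ∧
    (∃! Jfix : S → ℝ, Γhat Jfix = Jfix) :=
  stmt18_general α hα0 g P hPnn W hW Φ r₀ ψ hψpos hψspan βψ hβψ hβψ1 Γhat hΓ hfin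
end
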